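/- arXiv:cs/0601051 — 3 statements merged into one kernel-verified Lean document; each statement's English description precedes it below -/
import Mathlib

section
/- Let R = unfolding(P, M). Then for all i ≥ 0, the i-th iteration of the immediate consequence operator of the positive program R from ∅ equals the i-th iteration of K_M^P from ∅: T_R ↑ i = K_M^P ↑ i. Hence M is an answer set of unfolding(P, M) (i.e., M = T_R ↑ ω) iff M is a fixpoint answer set of P (i.e., M = lfp(K_M^P)). -/
def IsSolution {Atom : Type*} (H : Set Atom) (sat : Set Atom → Prop)
    (S₁ S₂ : Set Atom) : Prop :=
  S₁ ⊆ H ∧ S₂ ⊆ H ∧ S₁ ∩ S₂ = ∅ ∧ ∀ J : Set Atom, S₁ ⊆ J → S₂ ∩ J = ∅ → sat J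

structure Rule (Atom : Type*) where
  head : Atom
  pos : Set Atom
  neg : Set Atom
  agg : Set (Set Atom × (Set Atom → Prop))

/-- The consequence operator `K_M^P`. -/
def K {Atom : Type*} (P : Set (Rule Atom)) (M I : Set Atom) : Set Atom :=
  { a | ∃ r ∈ P, M ∩ r.neg = ∅ ∧ r.head = a ∧ r.pos ⊆ I ∧
      ∀ c ∈ r.agg, IsSolution c.1 c.2 (I ∩ M ∩ c.1) (c.1 \ M) }

/-- An aggregate-free positive rule. -/
structure PosRule (Atom : Type*) where
  head : Atom
  pos : Set Atom

/-- The immediate consequence operator of a positive program. -/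
def TP {Atom : Type*} (R : Set (PosRule Atom)) (I : Set Atom) : Set Atom :=
  { a | ∃ r ∈ R, r.head = a ∧ r.pos ⊆ I }

/-- The unfolding of `P` with respect to `M`: for each rule `r` of `P` whose
negative body misses `M` and each choice of solutions `S_c ∈ S(c, M)` for the
aggregate atoms of `r`, the positive rule with head `head(r)` and positive
body `pos(r) ∪ ⋃_c S_c.p`. -/
def unfolding {Atom : Type*} (P : Set (Rule Atom)) (M : Set Atom) :
    Set (PosRule Atom) :=
  { r' | ∃ r ∈ P, M ∩ r.neg = ∅ ∧
      ∃ sel : Set Atom × (Set Atom → Prop) → Set Atom × Set Atom,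
        (∀ c ∈ r.agg,
          IsSolution c.1 c.2 (sel c).1 (sel c).2 ∧
          (sel c).1 ⊆ M ∧ (sel c).2 ∩ M = ∅) ∧
        r'.head = r.head ∧ r'.pos = r.pos ∪ ⋃ c ∈ r.agg, (sel c).1 }

lemma TP_unfolding_eq_K {Atom : Type*} (P : Set (Rule Atom)) (M : Set Atom) :
    TP (unfolding P M) = K P M := by
  funext I
  ext a
  constructor
  · rintro ⟨r', ⟨r, hrP, hneg, sel, hsel, hh, hp⟩, hhead, hpos⟩
    rw [hp] at hpos
    refine ⟨r, hrP, hneg, by rw [← hh, hhead], fun x hx => hpos (Or.inl hx), ?_⟩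
    intro c hc
    obtain ⟨⟨hS1H, hS2H, _, hsat⟩, hS1M, hS2M⟩ := hsel c hc
    have hS1I : (sel c).1 ⊆ I := fun x hx =>
      hpos (Or.inr (Set.mem_biUnion hc hx))
    refine ⟨fun x hx => hx.2, fun x hx => hx.1, ?_, ?_⟩
    · ext x; simp only [Set.mem_inter_iff, Set.mem_diff, Set.mem_empty_iff_false]
      tauto
    · intro J hJ1 hJ2
      apply hsat J
      · intro x hx
        exact hJ1 ⟨⟨hS1I hx, hS1M hx⟩, hS1H hx⟩
      · ext x
        simp only [Set.mem_inter_iff, Set.mem_empty_iff_false, iff_false, not_and]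
        intro hx2 hxJ
        have : x ∈ (c.1 \ M) ∩ J := ⟨⟨hS2H hx2, fun hxM =>
          (Set.eq_empty_iff_forall_notMem.mp hS2M x) ⟨hx2, hxM⟩⟩, hxJ⟩
        rw [hJ2] at this; exact this
  · rintro ⟨r, hrP, hneg, hhead, hpos, hsol⟩
    refine ⟨⟨a, r.pos ∪ ⋃ c ∈ r.agg, (I ∩ M ∩ c.1)⟩,
      ⟨r, hrP, hneg, fun c => (I ∩ M ∩ c.1, c.1 \ M), ?_, hhead.symm, rfl⟩, rfl, ?_⟩
    · intro c hc
      refine ⟨hsol c hc, fun x hx => hx.1.2, ?_⟩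
      ext x; simp only [Set.mem_inter_iff, Set.mem_diff, Set.mem_empty_iff_false]
      tauto
    · intro x hx
      rcases hx with hx | hx
      · exact hpos hx
      · obtain ⟨s, ⟨c, rfl⟩, hs⟩ := hx
        simp only [Set.mem_iUnion] at hs
        obtain ⟨hc, hxs⟩ := hs
        exact hxs.1.1

/-- With `R = unfolding(P, M)`, we have `T_R ↑ i = K_M^P ↑ i` for all `i`;
hence `M` is an answer set of `unfolding(P, M)` (i.e. `M = T_R ↑ ω`) iff `M`
is a fixpoint answer set of `P` (i.e. `M = lfp(K_M^P) = K_M^P ↑ ω`). -/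
theorem unfolding_iterates_eq {Atom : Type*}
    (P : Set (Rule Atom)) (M : Set Atom) :
    (∀ i : ℕ, (TP (unfolding P M))^[i] ∅ = (K P M)^[i] ∅) ∧
    ((M = ⋃ n, (TP (unfolding P M))^[n] ∅) ↔ (M = ⋃ n, (K P M)^[n] ∅)) := by
  have h := TP_unfolding_eq_K P M
  rw [h]
  exact ⟨fun _ => rfl, Iff.rfl⟩
end

section
/- Characterization of solutions for Sum = v: let H be a finite set of atoms, π : H → ℤ an assignment of values, and sat(I) iff Σ_{a ∈ I ∩ H} π(a) = v. Then ⟨S₁, S₂⟩ (disjoint subsets of H) is a solution iff Σ_{a ∈ S₁} π(a) = v and π(a) = 0 for every a ∈ H \ (S₁ ∪ S₂). -/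
/-- Solutions of `Sum = v`: for `π : Atom → ℤ`, a pair `⟨S₁, S₂⟩` of disjoint
subsets of the finite set `H` is a solution of the aggregate
`Σ_{a ∈ · ∩ H} π(a) = v` iff `Σ_{a ∈ S₁} π(a) = v` and `π(a) = 0` for every
undecided atom `a ∈ H \ (S₁ ∪ S₂)`. -/
theorem sum_eq_solution_iff {Atom : Type*} [DecidableEq Atom]
    (H : Finset Atom) (π : Atom → ℤ) (v : ℤ) (S₁ S₂ : Finset Atom)
    (h₁ : S₁ ⊆ H) (h₂ : S₂ ⊆ H) (hd : Disjoint S₁ S₂) :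
    (∀ I : Finset Atom, S₁ ⊆ I → Disjoint S₂ I → ∑ a ∈ I ∩ H, π a = v) ↔
      (∑ a ∈ S₁, π a = v ∧ ∀ a ∈ H \ (S₁ ∪ S₂), π a = 0) := by
  constructor
  · intro h
    have hS1 : ∑ a ∈ S₁, π a = v := by
      have := h S₁ (le_refl _) hd.symm
      rwa [Finset.inter_eq_left.mpr h₁] at this
    refine ⟨hS1, fun a ha => ?_⟩
    simp only [Finset.mem_sdiff, Finset.mem_union, not_or] at ha
    obtain ⟨haH, haS1, haS2⟩ := ha
    have := h (insert a S₁) (Finset.subset_insert _ _)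
      (Finset.disjoint_left.mpr (fun x hx => by
        simp only [Finset.mem_insert]
        push_neg
        exact ⟨fun hxa => haS2 (hxa ▸ hx), fun hxS1 =>
          (Finset.disjoint_left.mp hd hxS1) hx⟩))
    rw [Finset.inter_eq_left.mpr (Finset.insert_subset haH h₁),
      Finset.sum_insert haS1, hS1] at this
    linarith
  · rintro ⟨hS1, hz⟩ I hI hdI
    have hsub : S₁ ⊆ I ∩ H := Finset.subset_inter hI h₁
    rw [← Finset.sum_subset hsub (fun x hx hxS1 => by
      simp only [Finset.mem_inter] at hx
      exact hz x (Finset.mem_sdiff.mpr ⟨hx.2, by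
        simp only [Finset.mem_union, not_or]
        exact ⟨hxS1, Finset.disjoint_right.mp hdI hx.1⟩⟩))]
    exact hS1
end

section
/- Characterization of solutions for Max = v: let H be a finite nonempty set, π : H → ℤ, and sat(I) iff I ∩ H ≠ ∅ and max_{a ∈ I ∩ H} π(a) = v. Then ⟨S₁, S₂⟩ (disjoint subsets of H) is a solution iff S₁ ≠ ∅, max_{a ∈ S₁} π(a) = v, and π(a) ≤ v for every a ∈ H \ (S₁ ∪ S₂). -/
/-- Solutions of `Max = v`: for `π : Atom → ℤ`, a pair `⟨S₁, S₂⟩` of disjoint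
subsets of the finite set `H` is a solution of the aggregate
"`· ∩ H` is nonempty and `max_{a ∈ · ∩ H} π(a) = v`" iff `S₁ ≠ ∅`,
`max_{a ∈ S₁} π(a) = v`, and `π(a) ≤ v` for every `a ∈ H \ (S₁ ∪ S₂)`. -/
theorem max_eq_solution_iff {Atom : Type*} [DecidableEq Atom]
    (H : Finset Atom) (π : Atom → ℤ) (v : ℤ) (S₁ S₂ : Finset Atom)
    (hH : H.Nonempty) (h₁ : S₁ ⊆ H) (h₂ : S₂ ⊆ H) (hd : Disjoint S₁ S₂) :
    (∀ I : Finset Atom, S₁ ⊆ I → Disjoint S₂ I →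
        ((I ∩ H).Nonempty ∧ ((I ∩ H).image π).max = (v : WithBot ℤ))) ↔
      (S₁.Nonempty ∧ (S₁.image π).max = (v : WithBot ℤ) ∧
        ∀ a ∈ H \ (S₁ ∪ S₂), π a ≤ v) := by
  constructor
  · intro h
    have hS1 : S₁ ∩ H = S₁ := Finset.inter_eq_left.mpr h₁
    have h1 := h S₁ (le_refl _) hd.symm
    rw [hS1] at h1
    refine ⟨h1.1, h1.2, ?_⟩
    intro a ha
    simp only [Finset.mem_sdiff, Finset.mem_union, not_or] at ha
    have h2 := h (H \ S₂) (fun x hx => Finset.mem_sdiff.mpr ⟨h₁ hx, fun hx2 => Finset.disjoint_left.mp hd hx hx2⟩) Finset.disjoint_sdiff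
    have hmem : a ∈ ((H \ S₂) ∩ H) := Finset.mem_inter.mpr ⟨Finset.mem_sdiff.mpr ⟨ha.1, ha.2.2⟩, ha.1⟩
    have := Finset.le_max (Finset.mem_image_of_mem π hmem)
    rw [h2.2] at this
    exact_mod_cast this
  · rintro ⟨hne, hmax, hbound⟩ I hSI hdis
    have hIH : (I ∩ H).Nonempty := by
      obtain ⟨a, ha⟩ := hne
      exact ⟨a, Finset.mem_inter.mpr ⟨hSI ha, h₁ ha⟩⟩
    refine ⟨hIH, le_antisymm ?_ ?_⟩
    · refine Finset.max_le ?_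
      intro x hx
      obtain ⟨a, ha, rfl⟩ := Finset.mem_image.mp hx
      obtain ⟨haI, haH⟩ := Finset.mem_inter.mp ha
      have haS2 : a ∉ S₂ := fun h2 => Finset.disjoint_left.mp hdis h2 haI
      by_cases haS1 : a ∈ S₁
      · have := Finset.le_max (Finset.mem_image_of_mem π haS1)
        rwa [hmax] at this
      · have : π a ≤ v := hbound a (Finset.mem_sdiff.mpr ⟨haH, by simp [haS1, haS2]⟩)
        exact_mod_cast this
    · rw [← hmax]
      exact Finset.max_mono (Finset.image_subset_image (fun a ha => Finset.mem_inter.mpr ⟨hSI ha, h₁ ha⟩))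
end
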